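/- Let g : X → X be continuous on a compact metric space X without isolated points, transitive, with a finite invariant measure of full support, and suppose g does not have sensitive dependence on initial conditions. Then g is uniquely ergodic. -/

import Mathlib

/-!
Non-sensitivity gives, for every `ε`, a ball whose points stay `ε`-close along their orbits; a
point with dense orbit enters that ball, so it is an equicontinuity point of `(gⁿ)`. A finite
invariant measure of full support makes the return times of every ball syndetic (pigeonhole on the
sets `g⁻ᵃⁱ W`), so such a point `z` is uniformly recurrent and hence lies in every orbit closure:
`g` is minimal, every point is an equicontinuity point, and by compactness `(gⁿ)` is uniformly
equicontinuous. The Birkhoff averages of a continuous `f` are then uniformly close to their value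
at `z`; integrating against an invariant probability measure `ν` gives `Aₙ f z → ∫ f dν`, so `ν`
is determined by the orbit of `z`.
-/

open MeasureTheory Set Filter Topology

def IsSyndetic (S : Set ℕ) : Prop := ∃ K : ℕ, ∀ l : ℕ, ∃ n ∈ S, l ≤ n ∧ n ≤ l + K

lemma IsSyndetic.mono {S T : Set ℕ} (hS : IsSyndetic S) (hST : S ⊆ T) : IsSyndetic T :=
  let ⟨K, hK⟩ := hS
  ⟨K, fun l => let ⟨n, hn, hln, hnK⟩ := hK l; ⟨n, hST hn, hln, hnK⟩⟩

namespace MeasureTheory.MeasurePreserving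

variable {α : Type*} [MeasurableSpace α] {μ : Measure α} [IsFiniteMeasure μ] {f : α → α}
  {s : Set α}

lemma exists_lt_inter_preimage_iterate_sub_nonempty (hf : MeasurePreserving f μ μ)
    (hs : NullMeasurableSet s μ) (hs₀ : μ s ≠ 0) {a : ℕ → ℕ} (ha : StrictMono a) :
    ∃ i j, i < j ∧ (s ∩ f^[a j - a i] ⁻¹' s).Nonempty := by
  obtain ⟨k, hk⟩ := ENNReal.exists_nat_mul_gt hs₀ (measure_ne_top μ univ)
  have hsum : μ univ < ∑ i ∈ Finset.range k, μ (f^[a i] ⁻¹' s) := by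
    simpa [(hf.iterate _).measure_preimage hs, mul_comm] using hk
  obtain ⟨i, -, j, -, hij, x, hxi, hxj⟩ := exists_nonempty_inter_of_measure_univ_lt_sum_measure μ
    (fun i _ => hs.preimage (hf.iterate (a i)).quasiMeasurePreserving) hsum
  have key : ∀ {i j}, i < j → f^[a i] x ∈ s → f^[a j] x ∈ s →
      ∃ i j, i < j ∧ (s ∩ f^[a j - a i] ⁻¹' s).Nonempty := fun {i j} h hi hj =>
    ⟨i, j, h, f^[a i] x, hi, by
      rwa [mem_preimage, ← Function.iterate_add_apply, Nat.sub_add_cancel (ha h).le]⟩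
  rcases hij.lt_or_gt with h | h
  exacts [key h hxi hxj, key h hxj hxi]

lemma isSyndetic_setOf_inter_preimage_iterate_nonempty (hf : MeasurePreserving f μ μ)
    (hs : NullMeasurableSet s μ) (hs₀ : μ s ≠ 0) :
    IsSyndetic {n | (s ∩ f^[n] ⁻¹' s).Nonempty} := by
  by_contra hcon
  simp only [IsSyndetic, not_exists, not_forall, not_and, not_le] at hcon
  choose L hL using hcon
  have hL₀ : ∀ K, 0 < L K := fun K => Nat.pos_of_ne_zero fun h => by
    have := hL K 0 (by simpa using nonempty_of_measure_ne_zero hs₀) h.le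
    omega
  obtain ⟨a, ha⟩ : ∃ a : ℕ → ℕ, ∀ j, a (j + 1) = a j + L (a j) :=
    ⟨fun j => Nat.rec 0 (fun _ b => b + L b) j, fun _ => rfl⟩
  have hmono : StrictMono a := strictMono_nat_of_lt_succ fun j => by rw [ha]; linarith [hL₀ (a j)]
  obtain ⟨i, j, hij, hret⟩ := hf.exists_lt_inter_preimage_iterate_sub_nonempty hs hs₀ hmono
  obtain ⟨j, rfl⟩ : ∃ j', j = j' + 1 := ⟨j - 1, by omega⟩
  have hle : a i ≤ a j := hmono.monotone (Nat.le_of_lt_succ hij)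
  -- `a (j+1) - a i` lies in the window `[L (a j), L (a j) + a j]` that avoids all return times
  have := hL (a j) _ hret (by rw [ha]; omega)
  rw [ha] at this
  omega

end MeasureTheory.MeasurePreserving

section Iterates

variable {X : Type*} [MetricSpace X] {g : X → X}

def IsUniformlyRecurrent (g : X → X) (z : X) : Prop :=
  ∀ ε > 0, IsSyndetic {n | dist (g^[n] z) z < ε}

lemma eventually_forall_le_dist_iterate_lt (hg : Continuous g) (p : X) (K : ℕ) {ε : ℝ}
    (hε : 0 < ε) : ∀ᶠ y in 𝓝 p, ∀ i ≤ K, dist (g^[i] p) (g^[i] y) < ε :=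
  (eventually_all_finite (finite_Iic K)).2 fun i _ =>
    ((hg.iterate i).tendsto p).eventually (Metric.ball_mem_nhds _ hε) |>.mono
      fun _ hy => by rw [dist_comm]; exact hy

lemma denseRange_iterate_of_mem_closure (hg : Continuous g) {z p : X}
    (hz : DenseRange fun n => g^[n] z) (hzp : z ∈ closure (range fun n => g^[n] p)) :
    DenseRange fun n => g^[n] p := by
  have hinv : MapsTo g (closure (range fun n => g^[n] p)) (closure (range fun n => g^[n] p)) :=
    MapsTo.closure (fun _ ⟨n, hn⟩ => ⟨n + 1, by simp only [← hn, Function.iterate_succ_apply']⟩) hg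
  exact dense_closure.1 <| hz.mono <| range_subset_iff.2 fun n => hinv.iterate n hzp

lemma equicontinuousAt_iterate_of_denseRange (hg : Continuous g)
    (hstab : ∀ ε > 0, ∃ x, ∃ δ > 0, ∀ y ∈ Metric.closedBall x δ, ∀ n,
      dist (g^[n] x) (g^[n] y) ≤ ε)
    {q : X} (hq : DenseRange fun n => g^[n] q) : EquicontinuousAt (fun n => g^[n]) q := by
  refine Metric.equicontinuousAt_iff_right.2 fun ε hε => ?_
  obtain ⟨x, δ, hδ, hx⟩ := hstab (ε / 3) (by positivity)
  obtain ⟨m, hm⟩ := hq.exists_dist_lt x (half_pos hδ)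
  filter_upwards [eventually_forall_le_dist_iterate_lt hg q m (lt_min hε (half_pos hδ))]
    with y hy n
  rcases le_or_gt n m with hnm | hmn
  · exact (hy n hnm).trans_le (min_le_left _ _)
  obtain ⟨k, rfl⟩ := Nat.exists_eq_add_of_le' hmn.le
  have hqx : g^[m] q ∈ Metric.closedBall x δ := by
    rw [Metric.mem_closedBall, dist_comm]; linarith
  have hyx : g^[m] y ∈ Metric.closedBall x δ := by
    have := (hy m le_rfl).trans_le (min_le_right _ _)
    rw [Metric.mem_closedBall]
    linarith [dist_triangle (g^[m] y) (g^[m] q) x, dist_comm (g^[m] y) (g^[m] q),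
      dist_comm x (g^[m] q)]
  rw [Function.iterate_add_apply, Function.iterate_add_apply]
  linarith [dist_triangle_left (g^[k] (g^[m] q)) (g^[k] (g^[m] y)) (g^[k] x),
    hx _ hqx k, hx _ hyx k]

lemma isUniformlyRecurrent_of_equicontinuousAt [MeasurableSpace X] [OpensMeasurableSpace X]
    {μ : Measure X} [IsFiniteMeasure μ] (hμ : MeasurePreserving g μ μ)
    (hfull : ∀ U : Set X, IsOpen U → U.Nonempty → 0 < μ U) {z : X}
    (hz : EquicontinuousAt (fun n => g^[n]) z) : IsUniformlyRecurrent g z := by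
  intro ε hε
  obtain ⟨η, hη, hzη⟩ := Metric.equicontinuousAt_iff.1 hz (ε / 2) (half_pos hε)
  set W := Metric.ball z (min η (ε / 2))
  have hW : μ W ≠ 0 :=
    (hfull W Metric.isOpen_ball ⟨z, Metric.mem_ball_self (lt_min hη (half_pos hε))⟩).ne'
  refine (hμ.isSyndetic_setOf_inter_preimage_iterate_nonempty
    Metric.isOpen_ball.measurableSet.nullMeasurableSet hW).mono ?_
  rintro n ⟨w, hw, hnw⟩
  have hw' : dist w z < η := (Metric.mem_ball.1 hw).trans_le (min_le_left _ _)
  have hnw' : dist (g^[n] w) z < ε / 2 := (Metric.mem_ball.1 hnw).trans_le (min_le_right _ _)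
  show dist (g^[n] z) z < ε
  linarith [dist_triangle (g^[n] z) (g^[n] w) z, hzη w hw' n]

lemma IsUniformlyRecurrent.mem_closure_range_iterate (hg : Continuous g) {z p : X}
    (hz : IsUniformlyRecurrent g z) (hp : p ∈ closure (range fun n => g^[n] z)) :
    z ∈ closure (range fun n => g^[n] p) := by
  refine Metric.mem_closure_iff.2 fun ε hε => ?_
  obtain ⟨K, hK⟩ := hz (ε / 2) (half_pos hε)
  obtain ⟨-, hy, l, rfl⟩ := mem_closure_iff_nhds.1 hp _
    (eventually_forall_le_dist_iterate_lt hg p K (half_pos hε))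
  obtain ⟨n, hn, hln, hnK⟩ := hK l
  have hy' := hy (n - l) (by omega)
  rw [← Function.iterate_add_apply, Nat.sub_add_cancel hln] at hy'
  exact ⟨_, mem_range_self (n - l), by
    linarith [dist_triangle z (g^[n] z) (g^[n - l] p), dist_comm z (g^[n] z),
      dist_comm (g^[n - l] p) (g^[n] z), show dist (g^[n] z) z < ε / 2 from hn]⟩

end Iterates

section Birkhoff

lemma tendsto_birkhoffAverage_iterate_sub_birkhoffAverage {α E : Type*} [NormedAddCommGroup E]
    [NormedSpace ℝ E] {g : α → α} {f : α → E} (hf : Bornology.IsBounded (range f))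
    (x : α) (m : ℕ) :
    Tendsto (fun n => birkhoffAverage ℝ g f n (g^[m] x) - birkhoffAverage ℝ g f n x)
      atTop (𝓝 0) := by
  induction m with
  | zero => simp
  | succ m ih =>
    simpa [Function.iterate_succ_apply'] using
      (tendsto_birkhoffAverage_apply_sub_birkhoffAverage' ℝ hf g (g^[m] x)).add ih

variable {X E : Type*} [MetricSpace X] [NormedAddCommGroup E] [NormedSpace ℝ E]
  {g : X → X} {f : X → E}

lemma DenseRange.exists_forall_exists_le_dist_lt [CompactSpace X] {u : ℕ → X}
    (hu : DenseRange u) {δ : ℝ} (hδ : 0 < δ) : ∃ M, ∀ y, ∃ m ≤ M, dist y (u m) < δ := by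
  obtain ⟨t, ht⟩ := isCompact_univ.elim_finite_subcover (fun m => Metric.ball (u m) δ)
    (fun _ => Metric.isOpen_ball) fun y _ => mem_iUnion.2 (hu.exists_dist_lt y hδ |>.imp
      fun _ => Metric.mem_ball.2)
  refine ⟨t.sup id, fun y => ?_⟩
  obtain ⟨m, hm, hy⟩ := mem_iUnion₂.1 (ht (mem_univ y))
  exact ⟨m, Finset.le_sup (f := id) hm, hy⟩

lemma uniformEquicontinuous_birkhoffAverage_of_uniformEquicontinuous
    (hg : UniformEquicontinuous fun n => g^[n]) (hf : UniformContinuous f) :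
    UniformEquicontinuous (birkhoffAverage ℝ g f) := by
  refine Metric.uniformEquicontinuous_iff.2 fun ε hε => ?_
  obtain ⟨η, hη, hfη⟩ := Metric.uniformContinuous_iff.1 hf (ε / 2) (half_pos hε)
  obtain ⟨δ, hδ, hgδ⟩ := Metric.uniformEquicontinuous_iff.1 hg η hη
  refine ⟨δ, hδ, fun x y hxy n => ?_⟩
  calc dist (birkhoffAverage ℝ g f n x) (birkhoffAverage ℝ g f n y)
      ≤ (∑ k ∈ Finset.range n, dist (f (g^[k] x)) (f (g^[k] y))) / n :=
        dist_birkhoffAverage_birkhoffAverage_le ..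
    _ ≤ (∑ _k ∈ Finset.range n, ε / 2) / n := by
        gcongr with k; exact (hfη (hgδ x y hxy k)).le
    _ ≤ ε / 2 := by
        rcases eq_or_ne n 0 with rfl | hn
        · simpa using (half_pos hε).le
        · simp [hn]
    _ < ε := half_lt_self hε

lemma eventually_forall_dist_birkhoffAverage_lt [CompactSpace X]
    (hg : UniformEquicontinuous fun n => g^[n]) {z : X} (hz : DenseRange fun n => g^[n] z)
    (hf : Continuous f) {ε : ℝ} (hε : 0 < ε) :
    ∀ᶠ n in atTop, ∀ y, dist (birkhoffAverage ℝ g f n y) (birkhoffAverage ℝ g f n z) < ε := by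
  obtain ⟨δ, hδ, hδA⟩ := Metric.uniformEquicontinuous_iff.1
    (uniformEquicontinuous_birkhoffAverage_of_uniformEquicontinuous hg
      (CompactSpace.uniformContinuous_of_continuous hf)) (ε / 2) (half_pos hε)
  obtain ⟨M, hM⟩ := hz.exists_forall_exists_le_dist_lt hδ
  have hshift : ∀ᶠ n in atTop, ∀ m ≤ M,
      dist (birkhoffAverage ℝ g f n (g^[m] z)) (birkhoffAverage ℝ g f n z) < ε / 2 :=
    (eventually_all_finite (finite_Iic M)).2 fun m _ =>
      ((tendsto_birkhoffAverage_iterate_sub_birkhoffAverage (isCompact_range hf).isBounded z m)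
        |>.eventually (Metric.ball_mem_nhds 0 (half_pos hε))).mono fun n hn => by
          simpa [dist_eq_norm] using hn
  filter_upwards [hshift] with n hn y
  obtain ⟨m, hmM, hym⟩ := hM y
  linarith [dist_triangle (birkhoffAverage ℝ g f n y) (birkhoffAverage ℝ g f n (g^[m] z))
    (birkhoffAverage ℝ g f n z), hδA _ _ hym n, hn m hmM]

end Birkhoff

namespace MeasureTheory.MeasurePreserving

variable {α E : Type*} [MeasurableSpace α] [NormedAddCommGroup E] [NormedSpace ℝ E]
  {μ : Measure α} {g : α → α} {f : α → E}

lemma of_measure_preimage (hg : Measurable g)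
    (h : ∀ A : Set α, MeasurableSet A → μ (g ⁻¹' A) = μ A) : MeasurePreserving g μ μ :=
  ⟨hg, Measure.ext fun A hA => by rw [Measure.map_apply hg hA, h A hA]⟩

lemma integrable_birkhoffAverage (hg : MeasurePreserving g μ μ) (hf : Integrable f μ) (n : ℕ) :
    Integrable (birkhoffAverage ℝ g f n) μ :=
  (integrable_finsetSum _ fun k _ => (hg.iterate k).integrable_comp_of_integrable hf).smul _

lemma integral_birkhoffAverage [CompleteSpace E] (hg : MeasurePreserving g μ μ)
    (hf : Integrable f μ) {n : ℕ} (hn : n ≠ 0) :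
    ∫ x, birkhoffAverage ℝ g f n x ∂μ = ∫ x, f x ∂μ := by
  have hk : ∀ k, ∫ x, f (g^[k] x) ∂μ = ∫ x, f x ∂μ := fun k => by
    rw [← integral_map (hg.iterate k).aemeasurable
      (by rw [(hg.iterate k).map_eq]; exact hf.aestronglyMeasurable), (hg.iterate k).map_eq]
  simp only [birkhoffAverage, birkhoffSum]
  rw [integral_smul, integral_finsetSum (f := fun k x => f (g^[k] x)) _ fun k _ =>
    (hg.iterate k).integrable_comp_of_integrable hf]
  simp only [hk, Finset.sum_const, Finset.card_range]
  rw [← Nat.cast_smul_eq_nsmul ℝ, inv_smul_smul₀ (Nat.cast_ne_zero.2 hn)]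

end MeasureTheory.MeasurePreserving

lemma tendsto_birkhoffAverage_integral {X E : Type*} [MetricSpace X] [CompactSpace X]
    [MeasurableSpace X] [BorelSpace X] [NormedAddCommGroup E] [NormedSpace ℝ E] [CompleteSpace E]
    {g : X → X} (hg : UniformEquicontinuous fun n => g^[n]) {z : X}
    (hz : DenseRange fun n => g^[n] z) {f : X → E} (hf : Continuous f) {ν : Measure X}
    [IsProbabilityMeasure ν] (hν : MeasurePreserving g ν ν) :
    Tendsto (fun n => birkhoffAverage ℝ g f n z) atTop (𝓝 (∫ x, f x ∂ν)) := by
  have hfi : Integrable f ν := hf.integrable_of_hasCompactSupport (.of_compactSpace f)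
  refine Metric.tendsto_nhds.2 fun ε hε => ?_
  filter_upwards [eventually_forall_dist_birkhoffAverage_lt hg hz hf (half_pos hε),
    eventually_ne_atTop 0] with n hn hn₀
  have hA := hν.integrable_birkhoffAverage hfi n
  calc dist (birkhoffAverage ℝ g f n z) (∫ x, f x ∂ν)
      = ‖∫ x, (birkhoffAverage ℝ g f n x - birkhoffAverage ℝ g f n z) ∂ν‖ := by
        rw [integral_sub hA (integrable_const _), integral_const,
          hν.integral_birkhoffAverage hfi hn₀, dist_comm, dist_eq_norm]
        simp
    _ ≤ ε / 2 := by
        simpa using norm_integral_le_of_norm_le_const (μ := ν)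
          (f := fun x => birkhoffAverage ℝ g f n x - birkhoffAverage ℝ g f n z)
          (.of_forall fun x => by rw [← dist_eq_norm]; exact (hn x).le)
    _ < ε := half_lt_self hε

theorem uniquely_ergodic_of_not_sensitive_general {X : Type*} [MetricSpace X] [CompactSpace X]
    [MeasurableSpace X] [BorelSpace X]
    (g : X → X) (hg : Continuous g)
    (htrans : ∃ x : X, closure (Set.range fun n : ℕ => g^[n] x) = Set.univ)
    (μ : Measure X) [IsFiniteMeasure μ]
    (hinv : ∀ A : Set X, MeasurableSet A → μ (g ⁻¹' A) = μ A)
    (hfull : ∀ U : Set X, IsOpen U → U.Nonempty → 0 < μ U)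
    (hnotsens : ¬ ∃ ε > 0, ∀ x : X, ∀ δ > 0, ∃ y ∈ Metric.closedBall x δ,
        ∃ n : ℕ, ε < dist (g^[n] x) (g^[n] y)) :
    ∀ ν₁ ν₂ : Measure X, IsProbabilityMeasure ν₁ → IsProbabilityMeasure ν₂ →
      (∀ A : Set X, MeasurableSet A → ν₁ (g ⁻¹' A) = ν₁ A) →
      (∀ A : Set X, MeasurableSet A → ν₂ (g ⁻¹' A) = ν₂ A) →
      ν₁ = ν₂ := by
  intro ν₁ ν₂ _ _ hinv₁ hinv₂
  push Not at hnotsens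
  obtain ⟨z, hz⟩ := htrans
  have hzdense : DenseRange fun n => g^[n] z := dense_iff_closure_eq.2 hz
  have hrec : IsUniformlyRecurrent g z :=
    isUniformlyRecurrent_of_equicontinuousAt (.of_measure_preimage hg.measurable hinv) hfull
      (equicontinuousAt_iterate_of_denseRange hg hnotsens hzdense)
  have hmin : ∀ p, DenseRange fun n => g^[n] p := fun p =>
    denseRange_iterate_of_mem_closure hg hzdense
      (hrec.mem_closure_range_iterate hg (hzdense.closure_range ▸ mem_univ p))
  have hequi : UniformEquicontinuous fun n => g^[n] :=
    CompactSpace.uniformEquicontinuous_of_equicontinuous fun p =>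
      equicontinuousAt_iterate_of_denseRange hg hnotsens (hmin p)
  exact ext_of_forall_integral_eq_of_IsFiniteMeasure fun f => tendsto_nhds_unique
    (tendsto_birkhoffAverage_integral hequi hzdense f.continuous
      (.of_measure_preimage hg.measurable hinv₁))
    (tendsto_birkhoffAverage_integral hequi hzdense f.continuous
      (.of_measure_preimage hg.measurable hinv₂))

/-- A continuous transitive map of a compact metric space without
isolated points, with a finite invariant measure of full support, which does not
have sensitive dependence on initial conditions, is uniquely ergodic. -/
theorem uniquely_ergodic_of_not_sensitive {X : Type*} [MetricSpace X] [CompactSpace X]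
    [MeasurableSpace X] [BorelSpace X]
    (hX : ∀ x : X, ¬ IsOpen ({x} : Set X))
    (g : X → X) (hg : Continuous g)
    (htrans : ∃ x : X, closure (Set.range fun n : ℕ => g^[n] x) = Set.univ)
    (μ : Measure X) [IsFiniteMeasure μ]
    (hinv : ∀ A : Set X, MeasurableSet A → μ (g ⁻¹' A) = μ A)
    (hfull : ∀ U : Set X, IsOpen U → U.Nonempty → 0 < μ U)
    (hnotsens : ¬ ∃ ε > 0, ∀ x : X, ∀ δ > 0, ∃ y ∈ Metric.closedBall x δ,
        ∃ n : ℕ, ε < dist (g^[n] x) (g^[n] y)) :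
    ∀ ν₁ ν₂ : Measure X, IsProbabilityMeasure ν₁ → IsProbabilityMeasure ν₂ →
      (∀ A : Set X, MeasurableSet A → ν₁ (g ⁻¹' A) = ν₁ A) →
      (∀ A : Set X, MeasurableSet A → ν₂ (g ⁻¹' A) = ν₂ A) →
      ν₁ = ν₂ :=
  uniquely_ergodic_of_not_sensitive_general g hg htrans μ hinv hfull hnotsens
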